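/- Let E_{k−1}, E_k, M_1,...,M_k, Z_1,...,Z_k be random variables with values in finite sets on a common probability space, with k ≥ 2. Write M^j = (M_1,...,M_j) and Z^j = (Z_1,...,Z_j). If the chaining Markov condition I((M^{k−1}, Z^{k−1}); (M_k, E_k, Z_k) | E_{k−1}) = 0 holds, then I(M^k; (Z^k, E_k)) ≤ I(M^{k−1}; (Z^{k−1}, E_{k−1})) + I(M_k; (E_k, Z_k)) + I(E_{k−1}; (M^{k−1}, Z^{k−1})). -/

import Mathlib

open Finset

/-- Probability that the random variable `X` takes the value `a`, under the
probability mass function `p` on the finite sample space `Ω`. -/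
noncomputable def probOf {Ω α : Type*} [Fintype Ω] [Fintype α] [DecidableEq α]
    (p : Ω → ℝ) (X : Ω → α) (a : α) : ℝ :=
  ∑ ω, if X ω = a then p ω else 0

/-- Shannon entropy (base 2) of the random variable `X`. -/
noncomputable def entropy {Ω α : Type*} [Fintype Ω] [Fintype α] [DecidableEq α]
    (p : Ω → ℝ) (X : Ω → α) : ℝ :=
  -∑ a, probOf p X a * Real.logb 2 (probOf p X a)

/-- Conditional entropy `H(X|Y)` (base 2). -/
noncomputable def condEntropy {Ω α β : Type*} [Fintype Ω] [Fintype α] [Fintype β]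
    [DecidableEq α] [DecidableEq β] (p : Ω → ℝ) (X : Ω → α) (Y : Ω → β) : ℝ :=
  entropy p (fun ω => (X ω, Y ω)) - entropy p Y

/-- Mutual information `I(X;Y)` (base 2). -/
noncomputable def mutualInfo {Ω α β : Type*} [Fintype Ω] [Fintype α] [Fintype β]
    [DecidableEq α] [DecidableEq β] (p : Ω → ℝ) (X : Ω → α) (Y : Ω → β) : ℝ :=
  entropy p X + entropy p Y - entropy p (fun ω => (X ω, Y ω))

/-- Conditional mutual information `I(X;Y|Z)` (base 2). -/
noncomputable def condMutualInfo {Ω α β γ : Type*} [Fintype Ω] [Fintype α] [Fintype β]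
    [Fintype γ] [DecidableEq α] [DecidableEq β] [DecidableEq γ]
    (p : Ω → ℝ) (X : Ω → α) (Y : Ω → β) (Z : Ω → γ) : ℝ :=
  entropy p (fun ω => (X ω, Z ω)) + entropy p (fun ω => (Y ω, Z ω))
    - entropy p (fun ω => (X ω, Y ω, Z ω)) - entropy p Z


/-!
Entropies are expectations of `-logb 2` of point probabilities, so they do not change when a random
variable is relabelled injectively. Gibbs' inequality `∑ r log (r / q) ≥ ∑ r - ∑ q`, applied to
`r = P(x,y,z)` and `q = P(x,z) P(y,z) / P(z)` (which sums to one), gives `I(X;Y|Z) ≥ 0`.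

Write `M^k = (A, m)` and `(Z^k, E_k) ≅ (B, v)` with `A = M^{k-1}`, `m = M_k`, `B = Z^{k-1}`,
`v = (E_k, Z_k)`, and put `W = E_{k-1}`. Expanding everything into joint entropies gives
`I(A;B,W) + I(m;v) + I(W;A,B) - I(A,m;B,v)
  = I(B;v) + I(A;m) + I(A;W|B) + I(B;W|m,v) + I(A;W|B,m,v) - I(A,B;m,v|W)`,
and the last term is zero by the Markov condition.
-/

open Function Real

section Distribution

variable {Ω α β : Type*} [Fintype Ω] [Fintype α] [Fintype β] [DecidableEq α] [DecidableEq β]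
  (p : Ω → ℝ)

lemma probOf_nonneg (hp : ∀ ω, 0 ≤ p ω) (X : Ω → α) (a : α) : 0 ≤ probOf p X a :=
  sum_nonneg fun ω _ => by split_ifs <;> simp [hp ω]

lemma sum_probOf_mul (X : Ω → α) (F : α → ℝ) :
    ∑ a, probOf p X a * F a = ∑ ω, p ω * F (X ω) := by
  simp only [probOf, sum_mul, ite_mul, zero_mul]
  rw [sum_comm]
  simp

lemma sum_probOf (X : Ω → α) : ∑ a, probOf p X a = ∑ ω, p ω := by
  simpa using sum_probOf_mul p X 1

lemma probOf_le_probOf_comp (hp : ∀ ω, 0 ≤ p ω) (X : Ω → α) (f : α → β) (a : α) :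
    probOf p X a ≤ probOf p (fun ω => f (X ω)) (f a) :=
  sum_le_sum fun ω _ => by
    by_cases h : X ω = a
    · simp [h]
    · simp only [h, if_false]; split_ifs <;> simp [hp ω]

lemma probOf_comp_of_injective (X : Ω → α) {f : α → β} (hf : Injective f) (a : α) :
    probOf p (fun ω => f (X ω)) (f a) = probOf p X a := by
  simp only [probOf, hf.eq_iff]

lemma sum_probOf_prod_fst (X : Ω → α) (Y : Ω → β) (b : β) :
    ∑ a, probOf p (fun ω => (X ω, Y ω)) (a, b) = probOf p Y b := by
  simp only [probOf, Prod.mk.injEq, ite_and]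
  rw [sum_comm]
  simp

lemma entropy_eq_sum (X : Ω → α) :
    entropy p X = -∑ ω, p ω * logb 2 (probOf p X (X ω)) := by
  rw [entropy, sum_probOf_mul p X fun a => logb 2 (probOf p X a)]

lemma entropy_eq_of_injective {X : Ω → α} {Y : Ω → β} (f : α → β) (hf : Injective f)
    (hY : ∀ ω, Y ω = f (X ω)) : entropy p Y = entropy p X := by
  obtain rfl : Y = fun ω => f (X ω) := funext hY
  simp only [entropy_eq_sum, probOf_comp_of_injective p X hf]

end Distribution

lemma sum_sub_le_sum_mul_log_div {ι : Type*} (s : Finset ι) {r q : ι → ℝ}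
    (hr : ∀ i, 0 ≤ r i) (hq : ∀ i, 0 ≤ q i) (hrq : ∀ i, 0 < r i → 0 < q i) :
    ∑ i ∈ s, (r i - q i) ≤ ∑ i ∈ s, r i * log (r i / q i) := by
  refine sum_le_sum fun i _ => ?_
  rcases (hr i).eq_or_lt with h | h
  · simp [← h, hq i]
  · have hlog := one_sub_inv_le_log_of_pos (div_pos h (hrq i h))
    rw [inv_div] at hlog
    calc r i - q i = r i * (1 - q i / r i) := by field_simp
      _ ≤ r i * log (r i / q i) := mul_le_mul_of_nonneg_left hlog h.le

lemma log_two_mul_mul_logb_eq {r a b c : ℝ} (hr : 0 < r) (ha : 0 < a) (hb : 0 < b) (hc : 0 < c) :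
    log 2 * (r * (logb 2 r + logb 2 c - logb 2 a - logb 2 b)) = r * log (r / (a * b / c)) := by
  rw [log_div hr.ne' (by positivity), log_div (by positivity) hc.ne', log_mul ha.ne' hb.ne']
  simp only [logb]
  field_simp
  ring

section ConditionalMutualInformation

variable {Ω α β γ : Type*} [Fintype Ω] [Fintype α] [Fintype β] [Fintype γ]
  [DecidableEq α] [DecidableEq β] [DecidableEq γ] (p : Ω → ℝ) (X : Ω → α) (Y : Ω → β) (Z : Ω → γ)

lemma condMutualInfo_eq_sum : condMutualInfo p X Y Z =
    ∑ t : α × β × γ, probOf p (fun ω => (X ω, Y ω, Z ω)) t *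
      (logb 2 (probOf p (fun ω => (X ω, Y ω, Z ω)) t) + logb 2 (probOf p Z t.2.2)
        - logb 2 (probOf p (fun ω => (X ω, Z ω)) (t.1, t.2.2))
        - logb 2 (probOf p (fun ω => (Y ω, Z ω)) t.2)) := by
  simp only [condMutualInfo, entropy_eq_sum, sum_probOf_mul, mul_add, mul_sub, sum_add_distrib,
    sum_sub_distrib]
  ring

lemma sum_probOf_mul_probOf_div_probOf (hp1 : ∑ ω, p ω = 1) :
    ∑ t : α × β × γ, probOf p (fun ω => (X ω, Z ω)) (t.1, t.2.2) *
      probOf p (fun ω => (Y ω, Z ω)) t.2 / probOf p Z t.2.2 = 1 := by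
  calc _ = ∑ z, (∑ x, probOf p (fun ω => (X ω, Z ω)) (x, z)) *
        (∑ y, probOf p (fun ω => (Y ω, Z ω)) (y, z)) / probOf p Z z := by
        simp only [Fintype.sum_prod_type, sum_mul_sum, sum_div]
        exact (sum_congr rfl fun _ _ => sum_comm).trans sum_comm
    _ = ∑ z, probOf p Z z := by simp only [sum_probOf_prod_fst, mul_self_div_self]
    _ = 1 := by rw [sum_probOf, hp1]

lemma condMutualInfo_nonneg (hp : ∀ ω, 0 ≤ p ω) (hp1 : ∑ ω, p ω = 1) :
    0 ≤ condMutualInfo p X Y Z := by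
  set r := probOf p (fun ω => (X ω, Y ω, Z ω))
  set q : α × β × γ → ℝ := fun t => probOf p (fun ω => (X ω, Z ω)) (t.1, t.2.2) *
      probOf p (fun ω => (Y ω, Z ω)) t.2 / probOf p Z t.2.2
  have hr : ∀ t, 0 ≤ r t := probOf_nonneg p hp _
  have hq : ∀ t, 0 ≤ q t := fun t =>
    div_nonneg (mul_nonneg (probOf_nonneg p hp _ _) (probOf_nonneg p hp _ _))
      (probOf_nonneg p hp _ _)
  have hmarginal_pos : ∀ t, 0 < r t → 0 < probOf p (fun ω => (X ω, Z ω)) (t.1, t.2.2) ∧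
      0 < probOf p (fun ω => (Y ω, Z ω)) t.2 ∧ 0 < probOf p Z t.2.2 := fun t ht =>
    ⟨ht.trans_le (probOf_le_probOf_comp p hp _ (fun t => (t.1, t.2.2)) t),
      ht.trans_le (probOf_le_probOf_comp p hp _ Prod.snd t),
      ht.trans_le (probOf_le_probOf_comp p hp _ (fun t => t.2.2) t)⟩
  have hrq : ∀ t, 0 < r t → 0 < q t := fun t ht =>
    have ⟨hA, hB, hC⟩ := hmarginal_pos t ht
    div_pos (mul_pos hA hB) hC
  have hlog : log 2 * condMutualInfo p X Y Z = ∑ t, r t * log (r t / q t) := by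
    rw [condMutualInfo_eq_sum, mul_sum]
    refine sum_congr rfl fun t _ => ?_
    rcases (hr t).eq_or_lt with h | h
    · simp [r, ← h]
    obtain ⟨hA, hB, hC⟩ := hmarginal_pos t h
    exact log_two_mul_mul_logb_eq h hA hB hC
  have gibbs := sum_sub_le_sum_mul_log_div univ hr hq hrq
  rw [sum_sub_distrib, sum_probOf, hp1, sum_probOf_mul_probOf_div_probOf p X Y Z hp1, sub_self,
    ← hlog] at gibbs
  exact (mul_nonneg_iff_of_pos_left (log_pos one_lt_two)).1 gibbs

end ConditionalMutualInformation

section MutualInformation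

variable {Ω α β : Type*} [Fintype Ω] [Fintype α] [Fintype β] [DecidableEq α] [DecidableEq β]
  (p : Ω → ℝ)

lemma entropy_const_unit (hp1 : ∑ ω, p ω = 1) : entropy p (fun _ => ()) = 0 := by
  simp [entropy, probOf, hp1]

lemma entropy_prod_unit (X : Ω → α) : entropy p (fun ω => (X ω, ())) = entropy p X :=
  entropy_eq_of_injective p _ (Prod.mk_left_injective ()) fun _ => rfl

lemma condMutualInfo_const_unit (hp1 : ∑ ω, p ω = 1) (X : Ω → α) (Y : Ω → β) :
    condMutualInfo p X Y (fun _ => ()) = mutualInfo p X Y := by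
  rw [condMutualInfo, mutualInfo, entropy_prod_unit, entropy_prod_unit, entropy_const_unit p hp1,
    entropy_eq_of_injective p (Prod.map id fun b => (b, ()))
      (injective_id.prodMap (Prod.mk_left_injective ())) (X := fun ω => (X ω, Y ω))
      (Y := fun ω => (X ω, Y ω, ())) fun _ => rfl,
    sub_zero]

lemma mutualInfo_nonneg (hp : ∀ ω, 0 ≤ p ω) (hp1 : ∑ ω, p ω = 1) (X : Ω → α) (Y : Ω → β) :
    0 ≤ mutualInfo p X Y :=
  condMutualInfo_const_unit p hp1 X Y ▸ condMutualInfo_nonneg p X Y _ hp hp1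

lemma mutualInfo_eq_of_injective {α' β' : Type*} [Fintype α'] [Fintype β'] [DecidableEq α']
    [DecidableEq β'] {X : Ω → α} {Y : Ω → β} {X' : Ω → α'} {Y' : Ω → β'} {f : α → α'} {g : β → β'}
    (hf : Injective f) (hg : Injective g) (hX : ∀ ω, X' ω = f (X ω)) (hY : ∀ ω, Y' ω = g (Y ω)) :
    mutualInfo p X' Y' = mutualInfo p X Y := by
  rw [mutualInfo, mutualInfo, entropy_eq_of_injective p f hf hX, entropy_eq_of_injective p g hg hY,
    entropy_eq_of_injective p (Prod.map f g) (hf.prodMap hg) (X := fun ω => (X ω, Y ω))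
      fun ω => by simp [hX, hY]]

end MutualInformation

lemma mutualInfo_prod_le_of_condMutualInfo_eq_zero {Ω α β γ δ ε : Type*} [Fintype Ω]
    [Fintype α] [Fintype β] [Fintype γ] [Fintype δ] [Fintype ε]
    [DecidableEq α] [DecidableEq β] [DecidableEq γ] [DecidableEq δ] [DecidableEq ε]
    (p : Ω → ℝ) (hp : ∀ ω, 0 ≤ p ω) (hp1 : ∑ ω, p ω = 1)
    (A : Ω → α) (B : Ω → β) (W : Ω → γ) (m : Ω → δ) (v : Ω → ε)
    (hM : condMutualInfo p (fun ω => (A ω, B ω)) (fun ω => (m ω, v ω)) W = 0) :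
    mutualInfo p (fun ω => (A ω, m ω)) (fun ω => (B ω, v ω)) ≤
      mutualInfo p A (fun ω => (B ω, W ω)) + mutualInfo p m v
        + mutualInfo p W (fun ω => (A ω, B ω)) := by
  have hBv := mutualInfo_nonneg p hp hp1 B v
  have hAm := mutualInfo_nonneg p hp hp1 A m
  have hAW_B := condMutualInfo_nonneg p A W B hp hp1
  have hBW_mv := condMutualInfo_nonneg p B W (fun ω => (m ω, v ω)) hp hp1
  have hAW_Bmv := condMutualInfo_nonneg p A W (fun ω => (B ω, m ω, v ω)) hp hp1
  have hWB : entropy p (fun ω => (W ω, B ω)) = entropy p (fun ω => (B ω, W ω)) :=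
    entropy_eq_of_injective p Prod.swap Prod.swap_injective fun _ => rfl
  have hmvW : entropy p (fun ω => ((m ω, v ω), W ω)) = entropy p (fun ω => (W ω, m ω, v ω)) :=
    entropy_eq_of_injective p Prod.swap Prod.swap_injective fun _ => rfl
  have hAWB : entropy p (fun ω => (A ω, W ω, B ω)) = entropy p (fun ω => (A ω, B ω, W ω)) :=
    entropy_eq_of_injective p (Prod.map id Prod.swap) (injective_id.prodMap Prod.swap_injective)
      fun _ => rfl
  have hABW : entropy p (fun ω => ((A ω, B ω), W ω)) = entropy p (fun ω => (A ω, B ω, W ω)) :=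
    entropy_eq_of_injective p (Equiv.prodAssoc α β γ).symm (Equiv.injective _) fun _ => rfl
  have hWAB : entropy p (fun ω => (W ω, A ω, B ω)) = entropy p (fun ω => (A ω, B ω, W ω)) :=
    entropy_eq_of_injective p (fun s : α × β × γ => (s.2.2, s.1, s.2.1))
      (fun _ _ h => by simp_all [Prod.ext_iff]) fun _ => rfl
  have hWBmv : entropy p (fun ω => (W ω, B ω, m ω, v ω))
      = entropy p (fun ω => (B ω, W ω, m ω, v ω)) :=
    entropy_eq_of_injective p (fun s : β × γ × δ × ε => (s.2.1, s.1, s.2.2))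
      (fun _ _ h => by simp_all [Prod.ext_iff]) fun _ => rfl
  have hAmBv : entropy p (fun ω => ((A ω, m ω), (B ω, v ω)))
      = entropy p (fun ω => (A ω, B ω, m ω, v ω)) :=
    entropy_eq_of_injective p (fun s : α × β × δ × ε => ((s.1, s.2.2.1), (s.2.1, s.2.2.2)))
      (fun _ _ h => by simp_all [Prod.ext_iff]) fun _ => rfl
  have hABmvW : entropy p (fun ω => ((A ω, B ω), (m ω, v ω), W ω))
      = entropy p (fun ω => (A ω, W ω, B ω, m ω, v ω)) :=
    entropy_eq_of_injective p (fun s : α × γ × β × δ × ε => ((s.1, s.2.2.1), s.2.2.2, s.2.1))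
      (fun _ _ h => by simp_all [Prod.ext_iff]) fun _ => rfl
  simp only [mutualInfo, condMutualInfo] at *
  rw [hmvW, hABW, hABmvW] at hM
  rw [hWB, hAWB] at hAW_B
  rw [hWBmv] at hAW_Bmv
  rw [hAmBv, hWAB]
  linarith

def splitLast {k : ℕ} {β : Fin k → Type*} (h : k - 1 < k) (g : (i : Fin k) → β i) :
    ((i : {i : Fin k // i.val < k - 1}) → β i.1) × β ⟨k - 1, h⟩ :=
  (fun i => g i.1, g ⟨k - 1, h⟩)

lemma splitLast_injective {k : ℕ} {β : Fin k → Type*} (h : k - 1 < k) :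
    Injective (splitLast (β := β) h) := by
  intro g g' hg
  funext i
  by_cases hi : i.val < k - 1
  · exact congrFun (congrArg Prod.fst hg) ⟨i, hi⟩
  · obtain rfl : i = ⟨k - 1, h⟩ := Fin.ext (by have := i.isLt; simp only; omega)
    exact congrArg Prod.snd hg

/-- one step of the chaining bound: if
`I((M^{k-1}, Z^{k-1}); (M_k, E_k, Z_k) | E_{k-1}) = 0`, then
`I(M^k; (Z^k, E_k)) ≤ I(M^{k-1}; (Z^{k-1}, E_{k-1})) + I(M_k; (E_k, Z_k))
  + I(E_{k-1}; (M^{k-1}, Z^{k-1}))`. -/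
theorem chaining_single_step {Ω α₁ α₂ : Type*} [Fintype Ω]
    [Fintype α₁] [DecidableEq α₁] [Fintype α₂] [DecidableEq α₂]
    (p : Ω → ℝ) (hp : ∀ ω, 0 ≤ p ω) (hp1 : ∑ ω, p ω = 1)
    (k : ℕ) (hk : 2 ≤ k) (β γ : Fin k → Type*)
    [∀ i, Fintype (β i)] [∀ i, DecidableEq (β i)]
    [∀ i, Fintype (γ i)] [∀ i, DecidableEq (γ i)]
    (Ekm1 : Ω → α₁) (Ek : Ω → α₂)
    (M : (i : Fin k) → Ω → β i) (Z : (i : Fin k) → Ω → γ i)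
    (hMarkov : condMutualInfo p
      (fun ω => ((fun i : {i : Fin k // i.val < k - 1} => M i.1 ω),
                 (fun i : {i : Fin k // i.val < k - 1} => Z i.1 ω)))
      (fun ω => (M ⟨k - 1, by omega⟩ ω, Ek ω, Z ⟨k - 1, by omega⟩ ω))
      Ekm1 = 0) :
    mutualInfo p (fun ω => (fun i : Fin k => M i ω))
        (fun ω => ((fun i : Fin k => Z i ω), Ek ω)) ≤
      mutualInfo p (fun ω => (fun i : {i : Fin k // i.val < k - 1} => M i.1 ω))
        (fun ω => ((fun i : {i : Fin k // i.val < k - 1} => Z i.1 ω), Ekm1 ω)) +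
      mutualInfo p (M ⟨k - 1, by omega⟩)
        (fun ω => (Ek ω, Z ⟨k - 1, by omega⟩ ω)) +
      mutualInfo p Ekm1
        (fun ω => ((fun i : {i : Fin k // i.val < k - 1} => M i.1 ω),
                   (fun i : {i : Fin k // i.val < k - 1} => Z i.1 ω))) := by
  have hlast : k - 1 < k := by omega
  -- the second relabelling is `(Z^k, E_k) ↦ ((Z^{k-1}, Z_k), E_k) ↦ (Z^{k-1}, (E_k, Z_k))`
  have hsplit := mutualInfo_eq_of_injective p (splitLast_injective hlast)
    (((Equiv.prodAssoc _ _ _).trans ((Equiv.refl _).prodCongr (Equiv.prodComm _ _))).injective.comp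
      ((splitLast_injective hlast).prodMap injective_id))
    (X := fun ω i => M i ω) (Y := fun ω => (fun i => Z i ω, Ek ω)) (fun _ => rfl) fun _ => rfl
  rw [← hsplit]
  exact mutualInfo_prod_le_of_condMutualInfo_eq_zero p hp hp1 _ _ Ekm1 _ _ hMarkov
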